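/- arXiv:0710.3857 — 5 statements merged into one kernel-verified Lean document; each statement's English description precedes it below -/
import Mathlib

section
/- Let n ≥ 2 and -1 < w < 1/(n-1). Let v_1,…,v_n be the unit vectors with pairwise inner product -w constructed with entries a and b as above. Then the n×n matrix whose i-th row is v_1 + v_2 + ⋯ + v_i has determinant equal to ±(1+w)^{(n-1)/2} · (1-w(n-1))^{1/2}, so the simplex Q_n(w) spanned by 0 and these partial sums has volume (1+w)^{(n-1)/2}(1-w(n-1))^{1/2}/n!. -/
/-!
Write `V = (a - b) I + b J` for the matrix with rows `v i`, and `L` for the lower-triangular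
all-ones matrix. Then `M = L V`, `det L = 1`, and the matrix determinant lemma gives
`det V = (a - b)^(n-1) (a + (n-1) b) = √(1+w)^(n-1) √(1-w(n-1))`.

For the volume, the simplex spanned by `0` and the rows of any matrix `A` is the image of the
corner simplex `conv {0, e₁, …, eₙ}` under `Aᵀ`, so its volume is `|det A|` times that of the
corner simplex. Taking `A = L` identifies the latter with the volume of the order simplex
`1 ≥ x₁ ≥ ⋯ ≥ xₙ ≥ 0`, which is `1/n!` because its `n!` images under coordinate permutations
tile the unit cube up to null sets.
-/

open MeasureTheory Matrix Finset Set
open scoped ENNReal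

def Matrix.lowerOnes (ι R : Type*) [LE ι] [DecidableLE ι] [Zero R] [One R] : Matrix ι ι R :=
  of fun i j => if j ≤ i then 1 else 0

theorem Matrix.lowerOnes_mul_apply {R ι : Type*} [NonAssocSemiring R] [Fintype ι] [Preorder ι]
    [DecidableLE ι] [LocallyFiniteOrderBot ι] (A : Matrix ι ι R) (i j : ι) :
    (lowerOnes ι R * A) i j = ∑ k ∈ Iic i, A k j := by
  simp only [mul_apply, lowerOnes, of_apply, ite_mul, one_mul, zero_mul]
  rw [← sum_filter, filter_ge_eq_Iic]

theorem Matrix.det_lowerOnes {R ι : Type*} [CommRing R] [Fintype ι] [LinearOrder ι] :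
    (lowerOnes ι R).det = 1 := by
  refine (det_of_isLowerTriangular _ fun i j hij => if_neg (not_le.2 hij)).trans ?_
  exact prod_eq_one fun i _ => if_pos le_rfl

theorem Matrix.det_of_ite_eq {K ι : Type*} [Field K] [Fintype ι] [DecidableEq ι] [Nonempty ι]
    {a b : K} (hab : a ≠ b) :
    (of fun i j : ι => if i = j then a else b).det =
      (a - b) ^ (Fintype.card ι - 1) * (a + (Fintype.card ι - 1) * b) := by
  have hc : a - b ≠ 0 := sub_ne_zero.2 hab
  have hsplit : (of fun i j : ι => if i = j then a else b) = (a - b) • (1 +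
      replicateCol Unit (fun _ : ι => b / (a - b)) * replicateRow Unit (fun _ : ι => (1 : K))) := by
    ext i j
    rcases eq_or_ne i j with rfl | hij
    · simp only [of_apply, ↓reduceIte, smul_apply, add_apply, one_apply_eq, mul_apply,
        Finset.univ_unique, replicateCol_apply, replicateRow_apply, mul_one, sum_const,
        Finset.card_singleton, one_smul, smul_eq_mul]
      field_simp
      ring
    · simp [hij, Matrix.mul_apply, mul_div_cancel₀ _ hc]
  rw [hsplit, det_smul, det_one_add_replicateCol_mul_replicateRow]
  simp only [dotProduct, one_mul, sum_const, card_univ, nsmul_eq_mul]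
  obtain ⟨k, hk⟩ := Nat.exists_eq_add_one.2 (Fintype.card_pos (α := ι))
  rw [hk, Nat.add_sub_cancel, pow_succ]
  push_cast
  field_simp
  ring

theorem Convex.sum_smul_mem_of_zero_mem {E ι : Type*} [AddCommGroup E] [Module ℝ E] {C : Set E}
    (hC : Convex ℝ C) (h0 : 0 ∈ C) {s : Finset ι} {t : ι → ℝ} {z : ι → E}
    (ht : ∀ i ∈ s, 0 ≤ t i) (hsum : ∑ i ∈ s, t i ≤ 1) (hz : ∀ i ∈ s, z i ∈ C) :
    ∑ i ∈ s, t i • z i ∈ C := by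
  have := hC.sum_mem (t := s.insertNone) (w := fun o => o.elim (1 - ∑ i ∈ s, t i) t)
    (z := fun o => o.elim 0 z) ?_ (by simp [sum_insertNone]) ?_
  · simpa [sum_insertNone] using this
  all_goals rintro (_ | i) hi
  · simpa using hsum
  · exact ht i (by simpa using hi)
  · exact h0
  · exact hz i (by simpa using hi)

def orderSimplex (n : ℕ) : Set (Fin n → ℝ) :=
  {x | Antitone x} ∩ univ.pi fun _ => Icc 0 1

theorem convex_orderSimplex (n : ℕ) : Convex ℝ (orderSimplex n) := by
  refine Convex.inter (fun x hx y hy a b ha hb _ i j hij => ?_)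
    (convex_pi fun _ _ => convex_Icc 0 1)
  exact add_le_add (smul_le_smul_of_nonneg_left (hx hij) ha)
    (smul_le_smul_of_nonneg_left (hy hij) hb)

theorem isClosed_orderSimplex (n : ℕ) : IsClosed (orderSimplex n) := by
  refine IsClosed.inter ?_ (isClosed_set_pi fun _ _ => isClosed_Icc)
  simp only [Antitone, ofPred_forall]
  exact isClosed_iInter fun i => isClosed_iInter fun j => isClosed_iInter fun _ =>
    isClosed_le (continuous_apply j) (continuous_apply i)

theorem lowerOnes_row_mem_orderSimplex {n : ℕ} (i : Fin n) :
    (lowerOnes (Fin n) ℝ).row i ∈ orderSimplex n := by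
  refine ⟨fun j k hjk => ?_, fun j _ => ?_⟩ <;> simp only [lowerOnes, of_row]
  · split_ifs with hk hj <;>
      first | exact le_rfl | exact zero_le_one | exact absurd (hjk.trans hk) hj
  · split_ifs <;> simp

theorem sum_sub_succ_smul_lowerOnes_row {n : ℕ} {X : ℕ → ℝ} (hX : X n = 0) :
    ∑ i : Fin n, (X i - X (i + 1)) • (lowerOnes (Fin n) ℝ).row i = fun j : Fin n => X j := by
  funext j
  simp only [Finset.sum_apply, Pi.smul_apply, lowerOnes, of_row, Fin.le_def, smul_eq_mul,
    mul_ite, mul_one, mul_zero]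
  rw [Fin.sum_univ_eq_sum_range (fun i => if (j : ℕ) ≤ i then X i - X (i + 1) else 0), ← sum_filter,
    show (range n).filter ((j : ℕ) ≤ ·) = Finset.Ico (j : ℕ) n by ext; simp [and_comm]]
  have htel := sum_Ico_sub (fun k => -X k) j.isLt.le
  simp only [neg_sub_neg] at htel
  rw [htel, hX, sub_zero]

theorem orderSimplex_subset_convexHull_insert_zero_range_lowerOnes (n : ℕ) :
    orderSimplex n ⊆ convexHull ℝ (insert 0 (range (lowerOnes (Fin n) ℝ).row)) := by
  rintro x ⟨hanti, hcube⟩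
  set X : ℕ → ℝ := fun k => if h : k < n then x ⟨k, h⟩ else 0
  have hX : ∀ i : Fin n, X i = x i := fun i => dif_pos i.isLt
  have hX_n : X n = 0 := dif_neg (lt_irrefl n)
  have hweight : ∀ i : Fin n, 0 ≤ X i - X (i + 1) := by
    intro i
    rw [hX, sub_nonneg]
    by_cases hi : (i : ℕ) + 1 < n
    · rw [show X (i + 1) = x ⟨i + 1, hi⟩ from dif_pos hi]
      exact hanti (Fin.le_def.2 (Nat.le_succ _))
    · rw [show X (i + 1) = 0 from dif_neg hi]
      exact (hcube i (mem_univ _)).1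
  have htotal : ∑ i : Fin n, (X i - X (i + 1)) ≤ 1 := by
    rw [Fin.sum_univ_eq_sum_range (fun i => X i - X (i + 1)), sum_range_sub', hX_n, sub_zero]
    by_cases hn : 0 < n
    · simpa [X, hn] using (hcube ⟨0, hn⟩ (mem_univ _)).2
    · simp [X, hn]
  rw [← funext hX, ← sum_sub_succ_smul_lowerOnes_row hX_n]
  exact (convex_convexHull ℝ _).sum_smul_mem_of_zero_mem (subset_convexHull ℝ _ (mem_insert _ _))
    (fun i _ => hweight i) htotal fun i _ => subset_convexHull ℝ _ (mem_insert_of_mem _ ⟨i, rfl⟩)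

theorem convexHull_insert_zero_range_lowerOnes (n : ℕ) :
    convexHull ℝ (insert 0 (range (lowerOnes (Fin n) ℝ).row)) = orderSimplex n := by
  refine (convexHull_min ?_ (convex_orderSimplex n)).antisymm
    (orderSimplex_subset_convexHull_insert_zero_range_lowerOnes n)
  rintro _ (rfl | ⟨i, rfl⟩)
  · exact ⟨fun _ _ _ => le_rfl, fun _ _ => ⟨le_rfl, zero_le_one⟩⟩
  · exact lowerOnes_row_mem_orderSimplex i

theorem volume_preimage_comp_perm {ι : Type*} [Fintype ι] (σ : Equiv.Perm ι) (s : Set (ι → ℝ)) :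
    volume ((· ∘ σ) ⁻¹' s) = volume s := by
  have hσ : ⇑(MeasurableEquiv.piCongrLeft (fun _ => ℝ) σ.symm) = (· ∘ σ) := by
    ext x i
    simp [MeasurableEquiv.coe_piCongrLeft, Equiv.piCongrLeft_apply]
  rw [← hσ]
  exact (volume_measurePreserving_piCongrLeft (fun _ => ℝ) σ.symm).measure_preimage_equiv s

theorem volume_setOf_apply_eq_apply {ι : Type*} [Fintype ι] {i j : ι} (hij : i ≠ j) :
    volume {x : ι → ℝ | x i = x j} = 0 := by
  classical
  let f : (ι → ℝ) →ₗ[ℝ] ℝ := LinearMap.proj (R := ℝ) (φ := fun _ => ℝ) i - LinearMap.proj j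
  have hker : {x : ι → ℝ | x i = x j} = (LinearMap.ker f : Set (ι → ℝ)) := by
    ext x
    simp [f, sub_eq_zero]
  rw [hker]
  refine Measure.addHaar_submodule _ _ fun htop => ?_
  have : Pi.single i (1 : ℝ) ∈ LinearMap.ker f := htop ▸ Submodule.mem_top
  simp [f, hij.symm] at this

theorem iUnion_preimage_comp_perm_orderSimplex (n : ℕ) :
    ⋃ σ : Equiv.Perm (Fin n), (· ∘ σ) ⁻¹' orderSimplex n = univ.pi fun _ => Icc 0 1 := by
  refine (iUnion_subset fun σ x hx i _ => ?_).antisymm fun x hx => mem_iUnion.2 ?_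
  · simpa using hx.2 (σ.symm i) (mem_univ _)
  · refine ⟨Fin.revPerm.trans (Tuple.sort x), fun i j hij => ?_, fun i _ => hx _ (mem_univ _)⟩
    exact Tuple.monotone_sort x (Fin.rev_le_rev.2 hij)

theorem pairwise_aedisjoint_preimage_comp_perm_orderSimplex (n : ℕ) :
    Pairwise fun σ τ : Equiv.Perm (Fin n) =>
      AEDisjoint volume ((· ∘ σ) ⁻¹' orderSimplex n) ((· ∘ τ) ⁻¹' orderSimplex n) := by
  intro σ τ hστ
  refine measure_mono_null (t := ⋃ (i) (j) (_ : i ≠ j), {x : Fin n → ℝ | x i = x j}) ?_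
    (measure_iUnion_null fun i => measure_iUnion_null fun j => measure_iUnion_null
      fun hij => volume_setOf_apply_eq_apply hij)
  rintro x ⟨⟨hσ, -⟩, ⟨hτ, -⟩⟩
  by_contra hx
  have hinj : Function.Injective x := fun i j hxij => by
    by_contra hij
    exact hx (mem_iUnion₂_of_mem (i := i) (j := j) (mem_iUnion_of_mem hij hxij))
  -- an injective tuple has only one decreasing rearrangement
  have hcomp : x ∘ σ = x ∘ τ := by
    refine Set.range_injOn_strictAnti (hσ.strictAnti_of_injective (hinj.comp σ.injective))
      (hτ.strictAnti_of_injective (hinj.comp τ.injective)) ?_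
    rw [range_comp, range_comp, σ.range_eq_univ, τ.range_eq_univ]
  exact hστ (Equiv.ext fun i => hinj (congrFun hcomp i))

theorem volume_orderSimplex (n : ℕ) : volume (orderSimplex n) = (n.factorial : ℝ≥0∞)⁻¹ := by
  have hmeas (σ : Equiv.Perm (Fin n)) : NullMeasurableSet ((· ∘ σ) ⁻¹' orderSimplex n) volume :=
    ((isClosed_orderSimplex n).measurableSet.preimage (by fun_prop)).nullMeasurableSet
  have hcube := measure_iUnion₀ (pairwise_aedisjoint_preimage_comp_perm_orderSimplex n) hmeas
  simp only [iUnion_preimage_comp_perm_orderSimplex, volume_pi_pi, Real.volume_Icc, sub_zero,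
    ENNReal.ofReal_one, prod_const_one, tsum_fintype, volume_preimage_comp_perm, sum_const,
    card_univ, Fintype.card_perm, Fintype.card_fin, nsmul_eq_mul] at hcube
  exact ENNReal.eq_inv_of_mul_eq_one_left ((mul_comm _ _).trans hcube.symm)

theorem convexHull_insert_zero_range_row_mul {m ι ι' : Type*} [Fintype ι] [DecidableEq ι]
    (A : Matrix m ι ℝ) (B : Matrix ι ι' ℝ) :
    convexHull ℝ (insert 0 (range (A * B).row)) =
      toLin' Bᵀ '' convexHull ℝ (insert 0 (range A.row)) := by
  rw [LinearMap.image_convexHull, image_insert_eq, map_zero, ← range_comp]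
  congr
  funext i
  simp [row_def, mul_apply_eq_vecMul, mulVec_transpose]

theorem volume_convexHull_insert_zero_range_row {n : ℕ} (A : Matrix (Fin n) (Fin n) ℝ) :
    volume (convexHull ℝ (insert 0 (range A.row))) = ENNReal.ofReal (|A.det| / n.factorial) := by
  have himage (A : Matrix (Fin n) (Fin n) ℝ) : volume (convexHull ℝ (insert 0 (range A.row))) =
      ENNReal.ofReal |A.det| *
        volume (convexHull ℝ (insert 0 (range (1 : Matrix (Fin n) (Fin n) ℝ).row))) := by
    rw [← one_mul A, convexHull_insert_zero_range_row_mul, Measure.addHaar_image_linearMap,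
      LinearMap.det_toLin', det_transpose, one_mul]
  have hcorner : volume (convexHull ℝ (insert 0 (range (1 : Matrix (Fin n) (Fin n) ℝ).row))) =
      (n.factorial : ℝ≥0∞)⁻¹ := by
    simpa [det_lowerOnes, convexHull_insert_zero_range_lowerOnes, volume_orderSimplex] using
      (himage (lowerOnes (Fin n) ℝ)).symm
  rw [himage, hcorner, ENNReal.ofReal_div_of_pos (by positivity), ENNReal.ofReal_natCast,
    div_eq_mul_inv]

theorem EuclideanSpace.volume_convexHull_insert_zero_range_toLp {n : ℕ}
    (A : Matrix (Fin n) (Fin n) ℝ) :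
    volume (convexHull ℝ
        (insert (0 : EuclideanSpace ℝ (Fin n)) (range fun i => WithLp.toLp 2 (A i)))) =
      ENNReal.ofReal (|A.det| / n.factorial) := by
  have himage := (WithLp.linearEquiv 2 ℝ (Fin n → ℝ)).symm.toLinearMap.image_convexHull
    (insert 0 (range A.row))
  rw [image_insert_eq, map_zero, ← range_comp] at himage
  have hpre : convexHull ℝ
      (insert (0 : EuclideanSpace ℝ (Fin n)) (range fun i => WithLp.toLp 2 (A i))) =
      WithLp.ofLp ⁻¹' convexHull ℝ (insert 0 (range A.row)) :=
    himage.symm.trans ((WithLp.linearEquiv 2 ℝ (Fin n → ℝ)).image_symm_eq_preimage _)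
  rw [hpre, (PiLp.volume_preserving_ofLp (Fin n)).measure_preimage
    (((finite_range A.row).insert 0).isCompact_convexHull ℝ |>.measurableSet.nullMeasurableSet),
    volume_convexHull_insert_zero_range_row]

theorem schobi_simplex_det_and_volume_general
    (n : ℕ) (hn : 2 ≤ n) (w : ℝ) (hw1 : -1 < w)
    (b a : ℝ)
    (hb : b = (Real.sqrt (1 - w * ((n : ℝ) - 1)) - Real.sqrt (1 + w)) / n)
    (ha : a = b + Real.sqrt (1 + w))
    (v : Fin n → Fin n → ℝ)
    (hv : ∀ i j, v i j = if i = j then a else b)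
    (M : Matrix (Fin n) (Fin n) ℝ)
    (hM : ∀ i j, M i j = ∑ k ∈ Finset.Iic i, v k j) :
    |M.det| = (1 + w) ^ (((n : ℝ) - 1) / 2) * Real.sqrt (1 - w * ((n : ℝ) - 1)) ∧
    MeasureTheory.volume
        (convexHull ℝ (insert (0 : EuclideanSpace ℝ (Fin n))
          (Set.range (fun i : Fin n => (WithLp.toLp 2 (M i) : EuclideanSpace ℝ (Fin n)))))) =
      ENNReal.ofReal
        ((1 + w) ^ (((n : ℝ) - 1) / 2) * Real.sqrt (1 - w * ((n : ℝ) - 1)) /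
          (n.factorial : ℝ)) := by
  have hc : 0 < √(1 + w) := Real.sqrt_pos.2 (by linarith)
  have : Nonempty (Fin n) := ⟨⟨0, by omega⟩⟩
  have hMV : M = lowerOnes (Fin n) ℝ * of fun i j => if i = j then a else b := by
    ext i j
    simp only [hM, lowerOnes_mul_apply, of_apply, hv]
  have hdet : M.det = √(1 + w) ^ (n - 1) * √(1 - w * (n - 1)) := by
    rw [hMV, det_mul, det_lowerOnes, one_mul, det_of_ite_eq (by rw [ha]; linarith),
      Fintype.card_fin, ha, add_sub_cancel_left, hb]
    field_simp
    ring
  have hrpow : (1 + w) ^ (((n : ℝ) - 1) / 2) = √(1 + w) ^ (n - 1) := by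
    rw [Real.rpow_div_two_eq_sqrt _ (by linarith), ← Nat.cast_pred (by omega), Real.rpow_natCast]
  have habs : |M.det| = (1 + w) ^ (((n : ℝ) - 1) / 2) * √(1 - w * (n - 1)) := by
    rw [hdet, hrpow, abs_of_nonneg (by positivity)]
  exact ⟨habs, habs ▸ EuclideanSpace.volume_convexHull_insert_zero_range_toLp M⟩

theorem schobi_simplex_det_and_volume
    (n : ℕ) (hn : 2 ≤ n) (w : ℝ) (hw1 : -1 < w) (hw2 : w < 1 / ((n : ℝ) - 1))
    (b a : ℝ)
    (hb : b = (Real.sqrt (1 - w * ((n : ℝ) - 1)) - Real.sqrt (1 + w)) / n)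
    (ha : a = b + Real.sqrt (1 + w))
    (v : Fin n → Fin n → ℝ)
    (hv : ∀ i j, v i j = if i = j then a else b)
    (M : Matrix (Fin n) (Fin n) ℝ)
    (hM : ∀ i j, M i j = ∑ k ∈ Finset.Iic i, v k j) :
    |M.det| = (1 + w) ^ (((n : ℝ) - 1) / 2) * Real.sqrt (1 - w * ((n : ℝ) - 1)) ∧
    MeasureTheory.volume
        (convexHull ℝ (insert (0 : EuclideanSpace ℝ (Fin n))
          (Set.range (fun i : Fin n => (WithLp.toLp 2 (M i) : EuclideanSpace ℝ (Fin n)))))) =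
      ENNReal.ofReal
        ((1 + w) ^ (((n : ℝ) - 1) / 2) * Real.sqrt (1 - w * ((n : ℝ) - 1)) /
          (n.factorial : ℝ)) :=
  schobi_simplex_det_and_volume_general n hn w hw1 b a hb ha v hv M hM
end

section
/- Let Γ be a group of isometries of ℝ^n and Ω ⊆ ℝ^n. Suppose polytopes A and B are each Γ-tiles for Ω, meaning the images of A (respectively B) under Γ have pairwise disjoint interiors and their union is Ω. Then A = ⋃_{g ∈ Γ} (A ∩ B^g), the sets A ∩ B^g have pairwise disjoint interiors, only finitely many are nonempty, and for each g ∈ Γ the piece A ∩ B^g is mapped by g^{-1} to the piece A^{g^{-1}} ∩ B of the corresponding decomposition of B. Hence A and B are Γ-equidissectable. -/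
/-- A polytope in ℝⁿ: a finite union of `n`-dimensional simplices. -/
def IsPolytope (n : ℕ) (P : Set (EuclideanSpace ℝ (Fin n))) : Prop :=
  ∃ (k : ℕ) (V : Fin k → Fin (n + 1) → EuclideanSpace ℝ (Fin n)),
    (∀ i, AffineIndependent ℝ (V i)) ∧
    P = ⋃ i, convexHull ℝ (Set.range (V i))

/-- `A` is a `Γ`-tile for `Ω`: the images of `A` under `Γ` have pairwise
disjoint interiors and their union is `Ω`. -/
def IsTileFor (n : ℕ) (Γ : Subgroup (EuclideanSpace ℝ (Fin n) ≃ᵢ EuclideanSpace ℝ (Fin n)))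
    (A Ω : Set (EuclideanSpace ℝ (Fin n))) : Prop :=
  (∀ g h : Γ, g ≠ h →
    Disjoint (interior ((g : EuclideanSpace ℝ (Fin n) ≃ᵢ EuclideanSpace ℝ (Fin n)) '' A))
      (interior ((h : EuclideanSpace ℝ (Fin n) ≃ᵢ EuclideanSpace ℝ (Fin n)) '' A))) ∧
  (⋃ g : Γ, (g : EuclideanSpace ℝ (Fin n) ≃ᵢ EuclideanSpace ℝ (Fin n)) '' A) = Ω

/-- `Γ`-equidissectability: decompositions into pieces with pairwise disjoint
interiors, matched pairwise by elements of `Γ`. -/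
def GammaEquidissectable (n : ℕ)
    (Γ : Subgroup (EuclideanSpace ℝ (Fin n) ≃ᵢ EuclideanSpace ℝ (Fin n)))
    (A B : Set (EuclideanSpace ℝ (Fin n))) : Prop :=
  ∃ (k : ℕ) (P Q : Fin k → Set (EuclideanSpace ℝ (Fin n))) (g : Fin k → Γ),
    (∀ i j, i ≠ j → Disjoint (interior (P i)) (interior (P j))) ∧
    (∀ i j, i ≠ j → Disjoint (interior (Q i)) (interior (Q j))) ∧
    A = ⋃ i, P i ∧ B = ⋃ i, Q i ∧
    ∀ i, ((g i : EuclideanSpace ℝ (Fin n) ≃ᵢ EuclideanSpace ℝ (Fin n)) : EuclideanSpace ℝ (Fin n) → EuclideanSpace ℝ (Fin n)) '' P i = Q i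


/-! The copies `gB` cover `Ω ⊇ A`, so the pieces `A ∩ gB` cover `A`, and their interiors are
disjoint because those of the copies are. A copy of `B` meeting the bounded set `A` lies in a fixed
bounded neighbourhood of `A` and contains a ball of fixed radius in its interior; these balls are
disjoint, so a volume count leaves only finitely many nonempty pieces. Since `g⁻¹` maps `A ∩ gB`
onto `g⁻¹A ∩ B`, and by symmetry the latter sets are the pieces of `B`, matching each piece with
its image is an equidissection. -/

open MeasureTheory Metric Set Bornology Function

theorem subset_cthickening_diam_of_inter_nonempty {α : Type*} [PseudoMetricSpace α]
    {A C : Set α} (hC : IsBounded C) (hAC : (A ∩ C).Nonempty) : C ⊆ cthickening (diam C) A := by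
  obtain ⟨x, hxA, hxC⟩ := hAC
  exact fun y hy => mem_cthickening_of_dist_le y x _ A hxA (dist_le_diam_of_mem hC hy hxC)

theorem finite_setOf_inter_nonempty_of_pairwise_disjoint_interior {E ι : Type*}
    [NormedAddCommGroup E] [NormedSpace ℝ E] [FiniteDimensional ℝ E] {A : Set E}
    {C : ι → Set E} {d ε : ℝ} (hA : IsBounded A) (hε : 0 < ε)
    (hCd : ∀ i, IsBounded (C i) ∧ diam (C i) ≤ d)
    (hball : ∀ i, (C i).Nonempty → ∃ x, ball x ε ⊆ C i)
    (hdisj : Pairwise (Disjoint on fun i => interior (C i))) :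
    {i | (A ∩ C i).Nonempty}.Finite := by
  borelize E
  let μ : Measure E := Measure.addHaar
  let K := cthickening d A
  have hK : μ K ≠ ⊤ := (hA.cthickening.measure_lt_top).ne
  have hlarge : {i | (A ∩ C i).Nonempty} ⊆ {i | μ (ball 0 ε) ≤ μ (interior (C i) ∩ K)} := by
    intro i hi
    obtain ⟨x, hx⟩ := hball i (hi.mono inter_subset_right)
    have hCK : C i ⊆ K :=
      (subset_cthickening_diam_of_inter_nonempty (hCd i).1 hi).trans
        (cthickening_mono (hCd i).2 A)
    calc μ (ball 0 ε) = μ (ball x ε) := (Measure.addHaar_ball_center μ x ε).symm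
      _ ≤ μ (interior (C i) ∩ K) :=
        measure_mono (subset_inter (isOpen_ball.subset_interior_iff.2 hx) (hx.trans hCK))
  refine (Measure.finite_const_le_meas_of_disjoint_iUnion μ (measure_ball_pos μ 0 hε)
    (fun i => isOpen_interior.measurableSet.inter isClosed_cthickening.measurableSet)
    (fun i j hij => (hdisj hij).mono inter_subset_left inter_subset_left)
    (ne_top_of_le_ne_top hK (measure_mono (iUnion_subset fun i => inter_subset_right)))).subset
    hlarge

theorem IsometryEquiv.symm_image_inter_image {α β : Type*} [PseudoEMetricSpace α]
    [PseudoEMetricSpace β] (e : α ≃ᵢ β) (A : Set β) (B : Set α) :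
    e.symm '' (A ∩ e '' B) = e.symm '' A ∩ B := by
  rw [image_inter e.symm.injective]
  exact congrArg _ (e.toEquiv.symm_image_image B)

theorem iUnion_subtype_eq_iUnion_of_nonempty_mem {ι α : Type*} {S : Set ι} {P : ι → Set α}
    (hS : ∀ i, (P i).Nonempty → i ∈ S) : ⋃ i : S, P i = ⋃ i, P i :=
  Subset.antisymm (iUnion_subset fun i => subset_iUnion P i) <|
    iUnion_subset fun i x hx => mem_iUnion.2 ⟨⟨i, hS i ⟨x, hx⟩⟩, hx⟩

local notation "𝔼" n => EuclideanSpace ℝ (Fin n)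

section Tiling

variable {n : ℕ}

namespace IsPolytope

theorem isCompact {P : Set (𝔼 n)} (hP : IsPolytope n P) : IsCompact P := by
  obtain ⟨k, V, -, rfl⟩ := hP
  exact isCompact_iUnion fun i => (finite_range (V i)).isCompact_convexHull ℝ

theorem interior_nonempty {P : Set (𝔼 n)} (hP : IsPolytope n P) (hne : P.Nonempty) :
    (interior P).Nonempty := by
  obtain ⟨k, V, hV, rfl⟩ := hP
  obtain ⟨i, -⟩ := mem_iUnion.1 hne.some_mem
  have hspan : affineSpan ℝ (range (V i)) = ⊤ := by
    rw [(hV i).affineSpan_eq_top_iff_card_eq_finrank_add_one]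
    simp
  exact (interior_convexHull_nonempty_iff_affineSpan_eq_top.2 hspan).mono
    (interior_mono (subset_iUnion _ i))

end IsPolytope

variable {Γ : Subgroup ((𝔼 n) ≃ᵢ 𝔼 n)}

namespace IsTileFor

theorem subset {A Ω : Set (𝔼 n)} (h : IsTileFor n Γ A Ω) : A ⊆ Ω :=
  h.2 ▸ subset_iUnion_of_subset 1 (by simp)

theorem eq_iUnion_inter_image {A B Ω : Set (𝔼 n)} (hB : IsTileFor n Γ B Ω) (hA : A ⊆ Ω) :
    A = ⋃ g : Γ, A ∩ (g : (𝔼 n) ≃ᵢ 𝔼 n) '' B := by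
  rw [← inter_iUnion, hB.2, inter_eq_left.2 hA]

theorem finite_setOf_inter_image_nonempty {A B Ω : Set (𝔼 n)} (hA : IsBounded A)
    (hB : IsPolytope n B) (htB : IsTileFor n Γ B Ω) :
    {g : Γ | (A ∩ (g : (𝔼 n) ≃ᵢ 𝔼 n) '' B).Nonempty}.Finite := by
  rcases B.eq_empty_or_nonempty with rfl | hBne
  · simp
  obtain ⟨x, hx⟩ := hB.interior_nonempty hBne
  obtain ⟨ε, hε, hball⟩ := isOpen_iff.1 isOpen_interior x hx
  refine finite_setOf_inter_nonempty_of_pairwise_disjoint_interior hA hε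
    (fun g => ⟨(hB.isCompact.image (g : (𝔼 n) ≃ᵢ 𝔼 n).continuous).isBounded,
      ((g : (𝔼 n) ≃ᵢ 𝔼 n).diam_image B).le⟩)
    (fun g _ => ⟨(g : (𝔼 n) ≃ᵢ 𝔼 n) x, ?_⟩) fun g h hgh => htB.1 g h hgh
  rw [← IsometryEquiv.image_ball]
  exact image_mono (hball.trans interior_subset)

end IsTileFor

theorem gammaEquidissectable_of_iUnion {ι : Type*} {A B : Set (𝔼 n)} (P : ι → Set (𝔼 n))
    (g : ι → Γ) (hfin : {i | (P i).Nonempty}.Finite)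
    (hP : Pairwise (Disjoint on fun i => interior (P i)))
    (hQ : Pairwise (Disjoint on fun i => interior ((g i : (𝔼 n) ≃ᵢ 𝔼 n) '' P i)))
    (hA : A = ⋃ i, P i) (hB : B = ⋃ i, (g i : (𝔼 n) ≃ᵢ 𝔼 n) '' P i) :
    GammaEquidissectable n Γ A B := by
  let S := {i | (P i).Nonempty}
  have : Finite S := hfin
  let e : Fin (Nat.card S) ≃ S := (Finite.equivFin S).symm
  have he : Injective fun j => (e j : ι) := Subtype.val_injective.comp e.injective
  refine ⟨Nat.card S, fun j => P (e j), fun j => (g (e j) : (𝔼 n) ≃ᵢ 𝔼 n) '' P (e j),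
    fun j => g (e j), fun j k hjk => hP (he.ne hjk), fun j k hjk => hQ (he.ne hjk), ?_, ?_,
    fun j => rfl⟩
  · rw [e.surjective.iUnion_comp fun i : S => P i, hA]
    exact (iUnion_subtype_eq_iUnion_of_nonempty_mem fun i hi => hi).symm
  · rw [e.surjective.iUnion_comp fun i : S => (g i : (𝔼 n) ≃ᵢ 𝔼 n) '' P i, hB]
    exact (iUnion_subtype_eq_iUnion_of_nonempty_mem fun i hi => hi.of_image).symm

end Tiling

theorem two_tile_theorem
    (n : ℕ) (Γ : Subgroup (EuclideanSpace ℝ (Fin n) ≃ᵢ EuclideanSpace ℝ (Fin n)))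
    (Ω A B : Set (EuclideanSpace ℝ (Fin n)))
    (hA : IsPolytope n A) (hB : IsPolytope n B)
    (htA : IsTileFor n Γ A Ω) (htB : IsTileFor n Γ B Ω) :
    (A = ⋃ g : Γ, A ∩ ((g : EuclideanSpace ℝ (Fin n) ≃ᵢ EuclideanSpace ℝ (Fin n)) '' B)) ∧
    (∀ g h : Γ, g ≠ h →
      Disjoint
        (interior (A ∩ ((g : EuclideanSpace ℝ (Fin n) ≃ᵢ EuclideanSpace ℝ (Fin n)) '' B)))
        (interior (A ∩ ((h : EuclideanSpace ℝ (Fin n) ≃ᵢ EuclideanSpace ℝ (Fin n)) '' B)))) ∧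
    {g : Γ | (A ∩ ((g : EuclideanSpace ℝ (Fin n) ≃ᵢ EuclideanSpace ℝ (Fin n)) '' B)).Nonempty}.Finite ∧
    (∀ g : Γ,
      ((g⁻¹ : Γ) : EuclideanSpace ℝ (Fin n) ≃ᵢ EuclideanSpace ℝ (Fin n)) ''
          (A ∩ ((g : EuclideanSpace ℝ (Fin n) ≃ᵢ EuclideanSpace ℝ (Fin n)) '' B)) =
        (((g⁻¹ : Γ) : EuclideanSpace ℝ (Fin n) ≃ᵢ EuclideanSpace ℝ (Fin n)) '' A) ∩ B) ∧
    GammaEquidissectable n Γ A B := by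
  have hdecA := htB.eq_iUnion_inter_image htA.subset
  have hdecB := htA.eq_iUnion_inter_image htB.subset
  have hdisj : Pairwise (Disjoint on fun g : Γ => interior (A ∩ (g : (𝔼 n) ≃ᵢ 𝔼 n) '' B)) :=
    fun g h hgh => (htB.1 g h hgh).mono (interior_mono inter_subset_right)
      (interior_mono inter_subset_right)
  have hfin := htB.finite_setOf_inter_image_nonempty hA.isCompact.isBounded hB
  have hmatch (g : Γ) : ((g⁻¹ : Γ) : (𝔼 n) ≃ᵢ 𝔼 n) '' (A ∩ (g : (𝔼 n) ≃ᵢ 𝔼 n) '' B) =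
      ((g⁻¹ : Γ) : (𝔼 n) ≃ᵢ 𝔼 n) '' A ∩ B :=
    (g : (𝔼 n) ≃ᵢ 𝔼 n).symm_image_inter_image A B
  refine ⟨hdecA, fun g h hgh => hdisj hgh, hfin, hmatch,
    gammaEquidissectable_of_iUnion _ (fun g => g⁻¹) hfin hdisj ?_ hdecA ?_⟩
  · intro g h hgh
    simp only [hmatch]
    exact (htA.1 _ _ (inv_injective.ne hgh)).mono (interior_mono inter_subset_left)
      (interior_mono inter_subset_left)
  · simp only [hmatch]
    rw [inv_surjective.iUnion_comp fun g : Γ => (g : (𝔼 n) ≃ᵢ 𝔼 n) '' A ∩ B]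
    simpa only [inter_comm] using hdecB
end

section
/- Let φ : ℝ² → ℝ² be the isometry (x,y) ↦ (y+1, x), and let A be the closed triangle with vertices (0,0), (1,0), (1,1). Then the images A^{φ^k} for k ∈ ℤ have pairwise disjoint interiors and their union is the closed strip Ω = {(x,y) : x ≥ y ≥ x-1}. -/
/-!
The square of `φ : (x, y) ↦ (y + 1, x)` is the translation by `(1, 1)`, so the even images of
`A = {0 ≤ y ≤ x ≤ 1}` are the lower halves of the diagonal unit squares `[m, m + 1]²` and the odd
images are the upper halves of the squares `[m + 1, m + 2] × [m, m + 1]`. These squares cover the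
strip, and two distinct half-squares meet only along edges, which carry no interior points.
-/

/-- The isometry `(x,y) ↦ (y+1, x)` of the plane, as a bijection (so that
integer powers make sense). -/
def stripMap : Equiv.Perm (ℝ × ℝ) where
  toFun p := (p.2 + 1, p.1)
  invFun p := (p.2, p.1 - 1)
  left_inv p := by simp
  right_inv p := by simp

def Homeomorph.toPermHom (X : Type*) [TopologicalSpace X] : (X ≃ₜ X) →* Equiv.Perm X where
  toFun := Homeomorph.toEquiv
  map_one' := rfl
  map_mul' _ _ := rfl

theorem Homeomorph.coe_zpow {X : Type*} [TopologicalSpace X] (h : X ≃ₜ X) (k : ℤ) :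
    ⇑(h ^ k) = ⇑(h.toEquiv ^ k) :=
  congrArg DFunLike.coe (map_zpow (Homeomorph.toPermHom X) h k)

def stripHomeomorph : ℝ × ℝ ≃ₜ ℝ × ℝ where
  toEquiv := stripMap
  continuous_toFun := by change Continuous fun p : ℝ × ℝ => (p.2 + 1, p.1); fun_prop
  continuous_invFun := by change Continuous fun p : ℝ × ℝ => (p.2, p.1 - 1); fun_prop

theorem interior_image_stripMap_zpow (k : ℤ) (s : Set (ℝ × ℝ)) :
    interior ((stripMap ^ k) '' s) = (stripMap ^ k) '' interior s := by
  have h : ⇑(stripMap ^ k) = ⇑(stripHomeomorph ^ k) :=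
    (Homeomorph.coe_zpow stripHomeomorph k).symm
  rw [h, (stripHomeomorph ^ k).image_interior]

theorem stripMap_zpow_two_mul (m : ℤ) :
    stripMap ^ (2 * m) = Equiv.addRight ((m : ℝ), (m : ℝ)) := by
  have hsq : stripMap ^ (2 : ℤ) = Equiv.addRight ((1 : ℝ), (1 : ℝ)) := by
    ext p <;> simp [sq, stripMap]
  rw [zpow_mul, hsq, Equiv.zsmul_addRight]
  ext <;> simp

theorem stripMap_zpow_two_mul_apply (m : ℤ) (p : ℝ × ℝ) :
    (stripMap ^ (2 * m)) p = (p.1 + m, p.2 + m) := by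
  rw [stripMap_zpow_two_mul]; rfl

theorem stripMap_zpow_two_mul_add_one_apply (m : ℤ) (p : ℝ × ℝ) :
    (stripMap ^ (2 * m + 1)) p = (p.2 + m + 1, p.1 + m) := by
  rw [zpow_add_one, Equiv.Perm.mul_apply, stripMap_zpow_two_mul_apply]
  ext
  · simp only [stripMap, Equiv.coe_fn_mk]; ring
  · simp only [stripMap, Equiv.coe_fn_mk]

theorem convexHull_triangle :
    convexHull ℝ {((0 : ℝ), (0 : ℝ)), (1, 0), (1, 1)} =
      {p : ℝ × ℝ | 0 ≤ p.2 ∧ p.2 ≤ p.1 ∧ p.1 ≤ 1} := by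
  refine subset_antisymm (convexHull_min ?_ ?_) ?_
  · rintro p (rfl | rfl | rfl) <;> norm_num
  · rintro p ⟨hp₀, hp₁, hp₂⟩ q ⟨hq₀, hq₁, hq₂⟩ a b ha hb hab
    simp only [Set.mem_ofPred_eq, Prod.fst_add, Prod.snd_add, Prod.smul_fst, Prod.smul_snd,
      smul_eq_mul]
    refine ⟨by positivity, by nlinarith, by nlinarith⟩
  · rintro ⟨x, y⟩ ⟨hy, hyx, hx⟩
    -- `(x, y) = (1 - x) • (0, 0) + (x - y) • (1, 0) + y • (1, 1)`
    have hw : ∀ i ∈ Finset.univ, 0 ≤ ![1 - x, x - y, y] i := by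
      intro i _
      fin_cases i
      exacts [sub_nonneg.2 hx, sub_nonneg.2 hyx, hy]
    have hz : ∀ i ∈ Finset.univ, ![((0 : ℝ), (0 : ℝ)), (1, 0), (1, 1)] i ∈
        convexHull ℝ {((0 : ℝ), (0 : ℝ)), (1, 0), (1, 1)} := by
      intro i _
      fin_cases i <;> apply subset_convexHull <;> simp
    convert (convex_convexHull ℝ _).sum_mem hw (by simp [Fin.sum_univ_three]) hz using 1
    ext <;> simp [Fin.sum_univ_three]

theorem interior_triangle_subset :
    interior {p : ℝ × ℝ | 0 ≤ p.2 ∧ p.2 ≤ p.1 ∧ p.1 ≤ 1} ⊆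
      {p : ℝ × ℝ | 0 < p.2 ∧ p.2 ≤ p.1 ∧ p.1 < 1} := by
  intro p hp
  have hsub : {p : ℝ × ℝ | 0 ≤ p.2 ∧ p.2 ≤ p.1 ∧ p.1 ≤ 1} ⊆ Set.Iic 1 ×ˢ Set.Ici 0 :=
    fun _ hq => ⟨hq.2.2, hq.1⟩
  have hbox := interior_mono hsub hp
  rw [interior_prod_eq, interior_Iic, interior_Ici] at hbox
  exact ⟨hbox.2, (interior_subset hp).2.1, hbox.1⟩

theorem disjoint_image_stripMap_zpow {k : ℤ} (hk : k ≠ 0) :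
    Disjoint {p : ℝ × ℝ | 0 < p.2 ∧ p.2 ≤ p.1 ∧ p.1 < 1}
      ((stripMap ^ k) '' {p : ℝ × ℝ | 0 < p.2 ∧ p.2 ≤ p.1 ∧ p.1 < 1}) := by
  rw [Set.disjoint_right]
  rintro _ ⟨q, ⟨hq₀, hq₁, hq₂⟩, rfl⟩ ⟨hp₀, hp₁, hp₂⟩
  obtain ⟨m, rfl | rfl⟩ := Int.even_or_odd' k
  · rw [stripMap_zpow_two_mul_apply] at hp₀ hp₁ hp₂
    have h₁ : (m : ℝ) < 1 := by linarith
    have h₂ : (-1 : ℝ) < m := by linarith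
    norm_cast at h₁ h₂; omega
  · rw [stripMap_zpow_two_mul_add_one_apply] at hp₀ hp₁ hp₂
    have h₁ : (0 : ℝ) < -m := by linarith
    have h₂ : (-m : ℝ) < 1 := by linarith
    norm_cast at h₁ h₂; omega

theorem iUnion_image_stripMap_zpow_triangle :
    ⋃ k : ℤ, (stripMap ^ k) '' {p : ℝ × ℝ | 0 ≤ p.2 ∧ p.2 ≤ p.1 ∧ p.1 ≤ 1} =
      {p : ℝ × ℝ | p.1 ≥ p.2 ∧ p.2 ≥ p.1 - 1} := by
  refine subset_antisymm (Set.iUnion_subset fun k => ?_) fun p ⟨hp₁, hp₂⟩ => ?_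
  · rintro _ ⟨q, ⟨hq₀, hq₁, hq₂⟩, rfl⟩
    obtain ⟨m, rfl | rfl⟩ := Int.even_or_odd' k
    · rw [stripMap_zpow_two_mul_apply]; constructor <;> dsimp only <;> linarith
    · rw [stripMap_zpow_two_mul_add_one_apply]; constructor <;> dsimp only <;> linarith
  · set n := ⌊p.2⌋
    have hn₁ : (n : ℝ) ≤ p.2 := Int.floor_le p.2
    have hn₂ : p.2 < n + 1 := Int.lt_floor_add_one p.2
    rw [Set.mem_iUnion]
    by_cases hx : p.1 ≤ n + 1
    · refine ⟨2 * n, (p.1 - n, p.2 - n), ⟨by linarith, by linarith, by linarith⟩, ?_⟩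
      rw [stripMap_zpow_two_mul_apply]; ext <;> dsimp only <;> ring
    · refine ⟨2 * n + 1, (p.2 - n, p.1 - n - 1), ⟨by linarith, by linarith, by linarith⟩, ?_⟩
      rw [stripMap_zpow_two_mul_add_one_apply]; ext <;> dsimp only <;> ring

theorem triangle_tiles_strip
    (A : Set (ℝ × ℝ))
    (hA : A = convexHull ℝ {((0 : ℝ), (0 : ℝ)), (1, 0), (1, 1)}) :
    (∀ j k : ℤ, j ≠ k →
      Disjoint (interior ((stripMap ^ j) '' A)) (interior ((stripMap ^ k) '' A))) ∧
    (⋃ k : ℤ, (stripMap ^ k) '' A) = {p : ℝ × ℝ | p.1 ≥ p.2 ∧ p.2 ≥ p.1 - 1} := by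
  rw [convexHull_triangle] at hA
  subst hA
  refine ⟨fun j k hjk => ?_, iUnion_image_stripMap_zpow_triangle⟩
  have hkj : stripMap ^ k = stripMap ^ j * stripMap ^ (k - j) := by
    rw [← zpow_add, add_sub_cancel]
  rw [interior_image_stripMap_zpow, interior_image_stripMap_zpow, hkj, Equiv.Perm.coe_mul,
    Set.image_comp, Set.disjoint_image_iff (stripMap ^ j).injective]
  exact (disjoint_image_stripMap_zpow (sub_ne_zero.2 hjk.symm)).mono interior_triangle_subset
    (Set.image_mono interior_triangle_subset)
end

section
/- Let φ : ℝ² → ℝ² be the isometry (x,y) ↦ (y+1, x), and let B be the closed square with vertices (0,0), (1/2,-1/2), (1,0), (1/2,1/2). Then the images B^{φ^k} for k ∈ ℤ have pairwise disjoint interiors and their union is the closed strip Ω = {(x,y) : x ≥ y ≥ x-1}. Consequently, the triangle with vertices (0,0),(1,0),(1,1) and the square B are equidissectable using two pieces. -/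
/-!
In the coordinates `s = x + y`, `d = x - y` the map `stripMap` is `(s, d) ↦ (s + 1, 1 - d)` and the
square `B` is `0 ≤ s, d ≤ 1`. Hence its `k`-th image is `0 ≤ d ≤ 1, k ≤ s ≤ k + 1`: these tiles
cover the strip `0 ≤ d ≤ 1` and meet only along the lines `s ∈ ℤ`. The triangle lies in the
tiles `0` and `1` and is cut by the line `s = 1`; inside `B`, the first piece is the part above the
`x`-axis, and the second piece moved back by `stripMap⁻¹` is the part below it.
-/

open Set
open scoped Pointwise

theorem Equiv.Perm.image_zpow_of_image_eq_succ {α : Type*} (f : Equiv.Perm α) (S : ℤ → Set α)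
    (h : ∀ k, f '' S k = S (k + 1)) (n k : ℤ) : (f ^ n) '' S k = S (k + n) := by
  induction n using Int.induction_on generalizing k with
  | zero => simp
  | succ n ih => rw [zpow_add_one, coe_mul, image_comp, h, ih, add_right_comm, add_assoc]
  | pred n ih =>
    have h_inv : ⇑f⁻¹ '' S k = S (k - 1) := by
      rw [← sub_add_cancel k 1, ← h, inv_def, symm_image_image, sub_add_cancel]
    rw [zpow_sub_one, coe_mul, image_comp, h_inv, ih, sub_add_eq_add_sub, add_sub_assoc]

theorem disjoint_interior_of_subset_preimage_Iic_of_subset_preimage_Ici {X α : Type*}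
    [TopologicalSpace X] [TopologicalSpace α] [LinearOrder α] [OrderTopology α]
    [DenselyOrdered α] [NoMinOrder α] [NoMaxOrder α] {f : X → α} (hf : IsOpenMap f)
    {S T : Set X} {c : α} (hS : S ⊆ f ⁻¹' Iic c) (hT : T ⊆ f ⁻¹' Ici c) :
    Disjoint (interior S) (interior T) := by
  have hS' : interior S ⊆ f ⁻¹' Iio c := by
    simpa only [interior_Iic] using
      (interior_mono hS).trans hf.interior_preimage_subset_preimage_interior
  have hT' : interior T ⊆ f ⁻¹' Ioi c := by
    simpa only [interior_Ici] using
      (interior_mono hT).trans hf.interior_preimage_subset_preimage_interior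
  exact (Iio_disjoint_Ioi_of_le le_rfl).preimage f |>.mono hS' hT'

theorem mem_segment_zero_add_segment_zero {E : Type*} [AddCommGroup E] [Module ℝ E]
    {u v p : E} :
    p ∈ segment ℝ 0 u + segment ℝ 0 v ↔
      ∃ a ∈ Icc (0 : ℝ) 1, ∃ b ∈ Icc (0 : ℝ) 1, a • u + b • v = p := by
  simp [segment_eq_image, mem_add]

theorem smul_add_smul_add_smul_mem_convexHull {E : Type*} [AddCommGroup E] [Module ℝ E]
    {x y z : E} {a b c : ℝ} (ha : 0 ≤ a) (hb : 0 ≤ b) (hc : 0 ≤ c) (habc : a + b + c = 1) :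
    a • x + b • y + c • z ∈ convexHull ℝ {x, y, z} := by
  have hx : x ∈ convexHull ℝ {x, y, z} := subset_convexHull ℝ _ (by simp)
  have hy : y ∈ convexHull ℝ {x, y, z} := subset_convexHull ℝ _ (by simp)
  have hz : z ∈ convexHull ℝ {x, y, z} := subset_convexHull ℝ _ (by simp)
  have := (convex_convexHull ℝ {x, y, z}).sum_mem (t := Finset.univ) (w := ![a, b, c])
    (z := ![x, y, z]) (by simp [Fin.forall_fin_succ, ha, hb, hc])
    (by simp [Fin.sum_univ_three, habc]) (by simp [Fin.forall_fin_succ, hx, hy, hz])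
  simpa [Fin.sum_univ_three] using this

theorem isOpenMap_fst_add_snd : IsOpenMap (fun p : ℝ × ℝ => p.1 + p.2) :=
  (ContinuousLinearMap.fst ℝ ℝ ℝ + ContinuousLinearMap.snd ℝ ℝ ℝ).isOpenMap_of_ne_zero
    (fun h => by simpa using congr($h (1, 0)))

def squareTile (k : ℤ) : Set (ℝ × ℝ) :=
  {p | 0 ≤ p.1 - p.2 ∧ p.1 - p.2 ≤ 1 ∧ k ≤ p.1 + p.2 ∧ p.1 + p.2 ≤ k + 1}

def triangle : Set (ℝ × ℝ) := {p | 0 ≤ p.2 ∧ 0 ≤ p.1 - p.2 ∧ p.1 ≤ 1}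

theorem stripMap_apply (p : ℝ × ℝ) : stripMap p = (p.2 + 1, p.1) := rfl

theorem stripMap_preimage_squareTile (k : ℤ) :
    stripMap ⁻¹' squareTile (k + 1) = squareTile k := by
  ext p
  simp only [squareTile, mem_preimage, mem_ofPred_eq, stripMap_apply, Int.cast_add, Int.cast_one]
  constructor <;> rintro ⟨h₁, h₂, h₃, h₄⟩ <;> refine ⟨?_, ?_, ?_, ?_⟩ <;> linarith

theorem image_zpow_stripMap_squareTile (n k : ℤ) :
    (stripMap ^ n) '' squareTile k = squareTile (k + n) :=
  stripMap.image_zpow_of_image_eq_succ squareTile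
    (fun k => by rw [← stripMap_preimage_squareTile, Equiv.image_preimage]) n k

theorem convexHull_square :
    convexHull ℝ {((0 : ℝ), (0 : ℝ)), (1 / 2, -(1 / 2)), (1, 0), (1 / 2, 1 / 2)} =
      squareTile 0 := by
  have h_sum : ({((0 : ℝ), (0 : ℝ)), (1 / 2, -(1 / 2)), (1, 0), (1 / 2, 1 / 2)} : Set (ℝ × ℝ)) =
      {0, (1 / 2, -(1 / 2))} + {0, (1 / 2, 1 / 2)} := by
    ext p
    simp only [mem_insert_iff, mem_singleton_iff, mem_add, exists_eq_or_imp, add_zero,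
      ↓existsAndEq, true_and, zero_add, Prod.mk_add_mk]
    norm_num
    tauto
  ext p
  rw [h_sum, convexHull_add, convexHull_pair, convexHull_pair, mem_segment_zero_add_segment_zero]
  constructor
  · rintro ⟨a, ⟨ha₀, ha₁⟩, b, ⟨hb₀, hb₁⟩, rfl⟩
    simp only [squareTile, mem_ofPred_eq, Prod.fst_add, Prod.snd_add, Prod.smul_mk, smul_eq_mul]
    refine ⟨?_, ?_, ?_, ?_⟩ <;> push_cast <;> linarith
  · rintro ⟨h₁, h₂, h₃, h₄⟩
    push_cast at h₃ h₄
    exact ⟨p.1 - p.2, ⟨h₁, h₂⟩, p.1 + p.2, ⟨by linarith, by linarith⟩, by ext <;> simp <;> ring⟩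

-- `triangle` uses `0 ≤ p.1 - p.2` rather than `p.2 ≤ p.1`, so that it is literally an
-- intersection of preimages of half-lines under linear maps.
theorem convex_triangle : Convex ℝ triangle :=
  ((convex_Ici 0).linear_preimage (LinearMap.snd ℝ ℝ ℝ)).inter <|
    ((convex_Ici 0).linear_preimage (LinearMap.fst ℝ ℝ ℝ - LinearMap.snd ℝ ℝ ℝ)).inter
      ((convex_Iic 1).linear_preimage (LinearMap.fst ℝ ℝ ℝ))

theorem convexHull_triangle_s7 : convexHull ℝ {((0 : ℝ), (0 : ℝ)), (1, 0), (1, 1)} = triangle := by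
  refine (convexHull_min ?_ convex_triangle).antisymm fun p ⟨h₁, h₂, h₃⟩ => ?_
  · rintro _ (rfl | rfl | rfl) <;> norm_num [triangle]
  · convert smul_add_smul_add_smul_mem_convexHull (x := ((0 : ℝ), (0 : ℝ))) (y := (1, 0))
      (z := (1, 1)) (sub_nonneg.2 h₃) h₂ h₁ (by ring) using 1
    ext <;> simp

theorem squareTile_subset_preimage_Iic (k : ℤ) :
    squareTile k ⊆ (fun p : ℝ × ℝ => p.1 + p.2) ⁻¹' Iic (k + 1 : ℤ) := fun p hp => by
  push_cast; exact hp.2.2.2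

theorem squareTile_subset_preimage_Ici (k : ℤ) :
    squareTile k ⊆ (fun p : ℝ × ℝ => p.1 + p.2) ⁻¹' Ici (k : ℝ) := fun _ hp => hp.2.2.1

theorem disjoint_interior_squareTile {j k : ℤ} (hjk : j ≠ k) :
    Disjoint (interior (squareTile j)) (interior (squareTile k)) := by
  wlog hlt : j < k generalizing j k
  · exact (this hjk.symm (hjk.lt_or_gt.resolve_left hlt)).symm
  exact disjoint_interior_of_subset_preimage_Iic_of_subset_preimage_Ici isOpenMap_fst_add_snd
    (squareTile_subset_preimage_Iic j)
    ((squareTile_subset_preimage_Ici k).trans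
      (preimage_mono (Ici_subset_Ici.2 (Int.cast_le.2 (Int.add_one_le_of_lt hlt)))))

theorem iUnion_squareTile :
    ⋃ k : ℤ, squareTile k = {p : ℝ × ℝ | p.1 ≥ p.2 ∧ p.2 ≥ p.1 - 1} := by
  ext p
  simp only [mem_iUnion, squareTile, mem_ofPred_eq]
  constructor
  · rintro ⟨k, h₁, h₂, -⟩
    constructor <;> linarith
  · rintro ⟨h₁, h₂⟩
    exact ⟨⌊p.1 + p.2⌋, by linarith, by linarith, Int.floor_le _, (Int.lt_floor_add_one _).le⟩

theorem triangle_subset_squareTile_zero_union_one : triangle ⊆ squareTile 0 ∪ squareTile 1 := by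
  rintro p ⟨h₁, h₂, h₃⟩
  rcases le_total (p.1 + p.2) 1 with h | h
  · left; refine ⟨h₂, ?_, ?_, ?_⟩ <;> push_cast <;> linarith
  · right; refine ⟨h₂, ?_, ?_, ?_⟩ <;> push_cast <;> linarith

theorem squareTile_zero_subset_triangle_union_preimage :
    squareTile 0 ⊆ triangle ∪ stripMap ⁻¹' triangle := by
  rintro p ⟨h₁, h₂, h₃, h₄⟩
  push_cast at h₃ h₄
  rcases le_total 0 p.2 with h | h
  · left; refine ⟨h, h₁, ?_⟩; linarith
  · right; refine ⟨?_, ?_, ?_⟩ <;> simp only [stripMap_apply] <;> linarith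

theorem triangle_eq_union_inter_squareTile :
    triangle = triangle ∩ squareTile 0 ∪ triangle ∩ squareTile 1 := by
  rw [← inter_union_distrib_left, inter_eq_left.2 triangle_subset_squareTile_zero_union_one]

theorem disjoint_interior_triangle_inter_squareTile :
    Disjoint (interior (triangle ∩ squareTile 0)) (interior (triangle ∩ squareTile 1)) :=
  disjoint_interior_of_subset_preimage_Iic_of_subset_preimage_Ici isOpenMap_fst_add_snd
    (inter_subset_right.trans (squareTile_subset_preimage_Iic 0))
    (inter_subset_right.trans (squareTile_subset_preimage_Ici 1))

theorem image_inv_stripMap_triangle_inter_squareTile :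
    ⇑stripMap⁻¹ '' (triangle ∩ squareTile 1) = stripMap ⁻¹' triangle ∩ squareTile 0 := by
  rw [Equiv.Perm.inv_def, Equiv.image_symm_eq_preimage, preimage_inter,
    ← stripMap_preimage_squareTile 0, zero_add]

theorem squareTile_zero_eq_union_image_inv :
    squareTile 0 = triangle ∩ squareTile 0 ∪ ⇑stripMap⁻¹ '' (triangle ∩ squareTile 1) := by
  rw [image_inv_stripMap_triangle_inter_squareTile, ← union_inter_distrib_right,
    inter_eq_right.2 squareTile_zero_subset_triangle_union_preimage]

theorem disjoint_interior_triangle_inter_squareTile_image_inv :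
    Disjoint (interior (triangle ∩ squareTile 0))
      (interior (⇑stripMap⁻¹ '' (triangle ∩ squareTile 1))) := by
  rw [image_inv_stripMap_triangle_inter_squareTile]
  refine (disjoint_interior_of_subset_preimage_Iic_of_subset_preimage_Ici isOpenMap_snd
    (c := (0 : ℝ)) ?_ fun p hp => hp.1.1).symm
  rintro p ⟨⟨-, -, h⟩, -⟩
  simpa [stripMap_apply] using h

theorem square_tiles_strip_and_two_piece_dissection
    (A B : Set (ℝ × ℝ))
    (hA : A = convexHull ℝ {((0 : ℝ), (0 : ℝ)), (1, 0), (1, 1)})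
    (hB : B = convexHull ℝ {((0 : ℝ), (0 : ℝ)), (1 / 2, -(1 / 2)), (1, 0), (1 / 2, 1 / 2)}) :
    (∀ j k : ℤ, j ≠ k →
      Disjoint (interior ((stripMap ^ j) '' B)) (interior ((stripMap ^ k) '' B))) ∧
    (⋃ k : ℤ, (stripMap ^ k) '' B) = {p : ℝ × ℝ | p.1 ≥ p.2 ∧ p.2 ≥ p.1 - 1} ∧
    ∃ j₁ j₂ : ℤ, j₁ ≠ j₂ ∧
      A = (A ∩ (stripMap ^ j₁) '' B) ∪ (A ∩ (stripMap ^ j₂) '' B) ∧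
      Disjoint (interior (A ∩ (stripMap ^ j₁) '' B)) (interior (A ∩ (stripMap ^ j₂) '' B)) ∧
      B = ((stripMap ^ (-j₁)) '' (A ∩ (stripMap ^ j₁) '' B)) ∪
          ((stripMap ^ (-j₂)) '' (A ∩ (stripMap ^ j₂) '' B)) ∧
      Disjoint (interior ((stripMap ^ (-j₁)) '' (A ∩ (stripMap ^ j₁) '' B)))
        (interior ((stripMap ^ (-j₂)) '' (A ∩ (stripMap ^ j₂) '' B))) := by
  subst hA hB
  simp only [convexHull_triangle_s7, convexHull_square, image_zpow_stripMap_squareTile, zero_add]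
  refine ⟨fun _ _ => disjoint_interior_squareTile, iUnion_squareTile, 0, 1, zero_ne_one, ?_⟩
  simp only [neg_zero, zpow_zero, Equiv.Perm.coe_one, image_id, zpow_neg_one]
  exact ⟨triangle_eq_union_inter_squareTile, disjoint_interior_triangle_inter_squareTile,
    squareTile_zero_eq_union_image_inv, disjoint_interior_triangle_inter_squareTile_image_inv⟩
end

section
/- With n, w, a, b, φ as above, define u_0 = 0 and u_i = φ^i(u_0) for i ∈ ℤ. Then for every i, the simplex Q^{(i)} := conv{u_i, u_{i+1}, …, u_{i+n}} is congruent to Q_n(w); in particular φ maps Q^{(i)} onto Q^{(i+1)}. -/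
/-!
Since `φ` permutes coordinates and then translates, it is an isometry, hence affine (Mazur–Ulam),
so `φ ^ i` carries `conv {u_0, …, u_n}` onto `conv {u_i, …, u_{i+n}}` and `φ` carries
`conv {u_i, …, u_{i+n}}` onto the next one. It remains to see `Q_n(w) = conv {u_0, …, u_n}`:
for `m ≤ n` the iterate `u_m` has entry `a + (m - 1) b` in its first `m` coordinates and `m b`
in the others, which is exactly the partial sum `v_1 + ⋯ + v_m`.
-/

open Set Finset

section OrbitHull

variable {E : Type*} [NormedAddCommGroup E] [NormedSpace ℝ E]

theorem IsometryEquiv.image_convexHull (f : E ≃ᵢ E) (s : Set E) :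
    f '' convexHull ℝ s = convexHull ℝ (f '' s) := by
  simpa [IsometryEquiv.coeFn_toRealAffineIsometryEquiv] using
    f.toRealAffineIsometryEquiv.toAffineEquiv.toAffineMap.image_convexHull s

theorem IsometryEquiv.zpow_image_convexHull_orbit (f : E ≃ᵢ E) (x : E) (m : ℕ) (k i : ℤ) :
    (f ^ k) '' convexHull ℝ (range fun j : Fin m => (f ^ (i + (j : ℕ))) x) =
      convexHull ℝ (range fun j : Fin m => (f ^ (k + i + (j : ℕ))) x) := by
  rw [IsometryEquiv.image_convexHull, ← range_comp]
  congr 2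
  funext j
  simp only [Function.comp_apply, ← IsometryEquiv.mul_apply, ← zpow_add, add_assoc]

end OrbitHull

theorem Fin.sum_Iic_ite_eq {n : ℕ} (a b : ℝ) (i j : Fin n) :
    ∑ k ∈ Iic i, (if k = j then a else b) =
      if j ≤ i then a + (i : ℕ) * b else ((i : ℕ) + 1) * b := by
  have hsplit : ∀ k, (if k = j then a else b) = b + if k = j then a - b else 0 := by
    intro k; split_ifs <;> ring
  simp only [hsplit, sum_add_distrib, Finset.sum_const, Fin.card_Iic, sum_ite_eq', Finset.mem_Iic,
    nsmul_eq_mul]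
  split_ifs <;> push_cast <;> ring

section CyclicShift

variable {n : ℕ} {a b : ℝ} (e : EuclideanSpace ℝ (Fin n) ≃ᵢ EuclideanSpace ℝ (Fin n))
  (he : ∀ (x : EuclideanSpace ℝ (Fin n)) (i : Fin n),
    e x i =
      if (i : ℕ) = 0 then x ⟨n - 1, Nat.sub_one_lt_of_lt i.isLt⟩ + a
      else x ⟨(i : ℕ) - 1, (Nat.sub_le _ 1).trans_lt i.isLt⟩ + b)
include he

theorem pow_apply_zero_of_le {m : ℕ} (hm : m ≤ n) (j : Fin n) :
    (e ^ m) 0 j = if (j : ℕ) < m then a + ((m : ℝ) - 1) * b else m * b := by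
  induction m generalizing j with
  | zero => simp
  | succ m ih =>
    rw [pow_succ', IsometryEquiv.mul_apply, he]
    simp only [ih (by omega)]
    push_cast
    split_ifs <;> first | omega | ring

theorem partialSum_eq_pow_apply_zero (i : Fin n) :
    (WithLp.toLp 2 (fun j => ∑ k ∈ Iic i, if k = j then a else b) :
        EuclideanSpace ℝ (Fin n)) = (e ^ ((i : ℕ) + 1)) 0 := by
  ext j
  rw [pow_apply_zero_of_le e he i.isLt]
  simp only [Fin.sum_Iic_ite_eq, Fin.le_def, Nat.lt_succ_iff]
  split_ifs <;> first | omega | (push_cast; ring)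

theorem insert_zero_range_partialSum :
    insert 0 (range fun i : Fin n =>
        (WithLp.toLp 2 (fun j => ∑ k ∈ Iic i, if k = j then a else b) :
          EuclideanSpace ℝ (Fin n))) =
      range fun j : Fin (n + 1) => (e ^ ((j : ℕ) : ℤ)) 0 := by
  rw [Fin.range_fin_succ]
  simp only [Fin.tail_def, Fin.val_zero, Nat.cast_zero, zpow_zero, IsometryEquiv.coe_one, id,
    Fin.val_succ, partialSum_eq_pow_apply_zero e he, zpow_natCast]

end CyclicShift

theorem schobi_translates_congruent
    (n : ℕ)
    (b a : ℝ)
    (e : EuclideanSpace ℝ (Fin n) ≃ᵢ EuclideanSpace ℝ (Fin n))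
    (he : ∀ (x : EuclideanSpace ℝ (Fin n)) (i : Fin n),
      e x i =
        if h : (i : ℕ) = 0 then x ⟨n - 1, by omega⟩ + a
        else x ⟨(i : ℕ) - 1, by omega⟩ + b)
    (u : ℤ → EuclideanSpace ℝ (Fin n))
    (hu : ∀ k : ℤ, u k = (e ^ k) 0)
    (v : Fin n → Fin n → ℝ)
    (hv : ∀ i j, v i j = if i = j then a else b)
    (Q : Set (EuclideanSpace ℝ (Fin n)))
    (hQ : Q = convexHull ℝ (insert (0 : EuclideanSpace ℝ (Fin n))
      (Set.range (fun i : Fin n =>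
        (WithLp.toLp 2 (fun j => ∑ k ∈ Finset.Iic i, v k j) : EuclideanSpace ℝ (Fin n)))))) :
    ∀ i : ℤ,
      (∃ f : EuclideanSpace ℝ (Fin n) ≃ᵢ EuclideanSpace ℝ (Fin n),
        f '' Q = convexHull ℝ (Set.range (fun j : Fin (n + 1) => u (i + (j : ℕ))))) ∧
      e '' convexHull ℝ (Set.range (fun j : Fin (n + 1) => u (i + (j : ℕ)))) =
        convexHull ℝ (Set.range (fun j : Fin (n + 1) => u (i + 1 + (j : ℕ)))) := by
  intro i
  obtain rfl : u = fun k => (e ^ k) 0 := funext hu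
  obtain rfl : v = fun k j => if k = j then a else b := funext₂ hv
  have hQ_orbit :
      Q = convexHull ℝ (range fun j : Fin (n + 1) => (e ^ ((0 : ℤ) + (j : ℕ))) 0) := by
    simp only [hQ, insert_zero_range_partialSum e he, zero_add]
  refine ⟨⟨e ^ i, ?_⟩, ?_⟩
  · rw [hQ_orbit, e.zpow_image_convexHull_orbit, add_zero]
  · have h := e.zpow_image_convexHull_orbit 0 (n + 1) 1 i
    rwa [zpow_one, add_comm 1 i] at h
end
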